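/- For any synchronizing automaton 𝒜 with n ≥ 2 states, Fr(𝒜) ≤ min{Rnk(ℐ_i) : i ∈ [1,k]}. Moreover, if Fs(𝒜) ∖ Rad(𝒜) ≠ ∅, then min{Rnk(ℐ_i) : i ∈ [1,k]} = Fr(𝒜). -/

import Mathlib

open scoped BigOperators

set_option synthInstance.maxHeartbeats 1000000
set_option maxHeartbeats 1000000

noncomputable section

/-- Action of a word on a state: `q · u`. -/
def actW {Q A : Type*} (δ : Q → A → Q) (q : Q) (u : List A) : Q :=
  u.foldl δ q

/-- The image `Q · u` of the full state set under a word. -/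
def imageSet {Q A : Type*} [Fintype Q] [DecidableEq Q] (δ : Q → A → Q) (u : List A) :
    Finset Q :=
  Finset.image (fun q => actW δ q u) Finset.univ

/-- The rank `rk(u) = |Q · u|` of a word. -/
def wordRank {Q A : Type*} [Fintype Q] [DecidableEq Q] (δ : Q → A → Q) (u : List A) : ℕ :=
  (imageSet δ u).card

/-- A word is reset (synchronizing) if `|Q · u| = 1`. -/
def IsReset {Q A : Type*} [Fintype Q] [DecidableEq Q] (δ : Q → A → Q) (u : List A) : Prop :=
  wordRank δ u = 1

/-- The automaton is synchronizing if it admits a reset word. -/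
def IsSynchronizing {Q A : Type*} [Fintype Q] [DecidableEq Q] (δ : Q → A → Q) : Prop :=
  ∃ u : List A, IsReset δ u

/-- `Syn(𝒜)`, the set of reset words. -/
def SynWords {Q A : Type*} [Fintype Q] [DecidableEq Q] (δ : Q → A → Q) : Set (List A) :=
  {u | IsReset δ u}

/-- The hyperplane `w⊥ = {v ∈ ℂQ : ∑ q, v q = 0}`. -/
def Wperp (Q : Type*) [Fintype Q] : Submodule ℂ (Q → ℂ) :=
  LinearMap.ker (∑ q : Q, (LinearMap.proj q : (Q → ℂ) →ₗ[ℂ] ℂ))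

theorem mem_Wperp {Q : Type*} [Fintype Q] (v : Q → ℂ) :
    v ∈ Wperp Q ↔ ∑ q : Q, v q = 0 := by
  simp [Wperp, LinearMap.mem_ker, LinearMap.sum_apply]

/-- The (right) action of a word on row vectors `v ↦ v·π(u)`. -/
def piLin {Q A : Type*} [Fintype Q] [DecidableEq Q] (δ : Q → A → Q) (u : List A) :
    (Q → ℂ) →ₗ[ℂ] (Q → ℂ) where
  toFun v := fun p => ∑ q ∈ Finset.univ.filter (fun q => actW δ q u = p), v q
  map_add' := by
    intro a b; funext p; simp [Finset.sum_add_distrib]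
  map_smul' := by
    intro c v; funext p; simp [Finset.mul_sum]

theorem piLin_mem {Q A : Type*} [Fintype Q] [DecidableEq Q] (δ : Q → A → Q) (u : List A) :
    ∀ v ∈ Wperp Q, piLin δ u v ∈ Wperp Q := by
  intro v hv
  rw [mem_Wperp] at hv ⊢
  have h := Finset.sum_fiberwise (Finset.univ : Finset Q) (fun q => actW δ q u) v
  calc ∑ p : Q, piLin δ u v p
      = ∑ p : Q, ∑ q ∈ Finset.univ.filter (fun q => actW δ q u = p), v q := rfl
    _ = ∑ q : Q, v q := h
    _ = 0 := hv

/-- The endomorphism of `w⊥` induced by a word. -/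
def rhoEnd {Q A : Type*} [Fintype Q] [DecidableEq Q] (δ : Q → A → Q) (u : List A) :
    Module.End ℂ (Wperp Q) :=
  (piLin δ u).restrict (piLin_mem δ u)

/-- The representation `ρ : Σ* → End(w⊥)`; we record it in the multiplicative opposite so
that `ρ (u ++ v) = ρ u * ρ v` (the paper's right-action convention). -/
def rho {Q A : Type*} [Fintype Q] [DecidableEq Q] (δ : Q → A → Q) (u : List A) :
    (Module.End ℂ (Wperp Q))ᵐᵒᵖ :=
  MulOpposite.op (rhoEnd δ u)

/-- `ℛ`, the ℂ-subalgebra generated by `ρ(Σ*)`. -/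
def Ralg {Q A : Type*} [Fintype Q] [DecidableEq Q] (δ : Q → A → Q) :
    Subalgebra ℂ (Module.End ℂ (Wperp Q))ᵐᵒᵖ :=
  Algebra.adjoin ℂ (Set.range (rho δ))

/-- `ρ(u)` seen as an element of `ℛ`. -/
def rhoR {Q A : Type*} [Fintype Q] [DecidableEq Q] (δ : Q → A → Q) (u : List A) :
    Ralg δ :=
  ⟨rho δ u, Algebra.subset_adjoin (Set.mem_range_self u)⟩

/-- The Jacobson radical `Rad(ℛ)` of `ℛ`, realised as a subset of the ambient algebra via
the standard characterisation: `x ∈ Rad(ℛ)` iff `x ∈ ℛ` and for every `y ∈ ℛ` the element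
`1 - y * x` is left-invertible in `ℛ`. -/
def RadSet {Q A : Type*} [Fintype Q] [DecidableEq Q] (δ : Q → A → Q) :
    Set (Module.End ℂ (Wperp Q))ᵐᵒᵖ :=
  {x | x ∈ Ralg δ ∧ ∀ y ∈ Ralg δ, ∃ z ∈ Ralg δ, z * (1 - y * x) = 1}

/-- `Rad(𝒜)`: the set of radical words, i.e. words `u` with `ρ(u) ∈ Rad(ℛ)`. -/
def RadWords {Q A : Type*} [Fintype Q] [DecidableEq Q] (δ : Q → A → Q) : Set (List A) :=
  {u | rho δ u ∈ RadSet δ}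

/-- The automaton is semisimple when `Rad(𝒜) = Syn(𝒜)`. -/
def IsSemisimple {Q A : Type*} [Fintype Q] [DecidableEq Q] (δ : Q → A → Q) : Prop :=
  RadWords δ = SynWords δ

/-- The `t`-packing number `D(t,r,n)`: the maximum size of a family of `r`-subsets of an
`n`-set in which every `t`-subset is contained in at most one member. -/
def packingNumber (t r n : ℕ) : ℕ :=
  sSup {m | ∃ F : Finset (Finset (Fin n)), F.card = m ∧ (∀ S ∈ F, S.card = r) ∧
    ∀ T : Finset (Fin n), T.card = t → (F.filter fun S => T ⊆ S).card ≤ 1}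

/-- The former-rank `Fr(𝒜)`: the least rank of a non-reset word. -/
def formerRank {Q A : Type*} [Fintype Q] [DecidableEq Q] (δ : Q → A → Q) : ℕ :=
  sInf {m | ∃ u : List A, ¬ IsReset δ u ∧ wordRank δ u = m}

/-- `Fs(𝒜)`: the set of former-synchronizing words. -/
def Fs {Q A : Type*} [Fintype Q] [DecidableEq Q] (δ : Q → A → Q) : Set (List A) :=
  {u | wordRank δ u = formerRank δ}

/-- `θ_i(u)`: the image of `ρ(u)` in the `i`-th Wedderburn–Artin matrix component, where
`e : ℛ → ∏ i, M_{n_i}(ℂ)` is the quotient map `ψ` followed by the fixed isomorphism. -/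
def theta {Q A : Type*} [Fintype Q] [DecidableEq Q] (δ : Q → A → Q) {k : ℕ} {nn : Fin k → ℕ}
    (e : Ralg δ →ₐ[ℂ] ∀ i : Fin k, Matrix (Fin (nn i)) (Fin (nn i)) ℂ)
    (u : List A) (i : Fin k) : Matrix (Fin (nn i)) (Fin (nn i)) ℂ :=
  e (rhoR δ u) i

/-- `supp(v) = {i : θ_i(v) ≠ 0}`. -/
def suppW {Q A : Type*} [Fintype Q] [DecidableEq Q] (δ : Q → A → Q) {k : ℕ} {nn : Fin k → ℕ}
    (e : Ralg δ →ₐ[ℂ] ∀ i : Fin k, Matrix (Fin (nn i)) (Fin (nn i)) ℂ)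
    (v : List A) : Set (Fin k) :=
  {i | theta δ e v i ≠ 0}

/-- `u ∈ Σ* v Σ*`, i.e. `v` is a factor of `u`. -/
def InFactor {A : Type*} (v u : List A) : Prop :=
  ∃ a b : List A, u = a ++ v ++ b

/-- `u` is a `v`-minimal word: `u ∈ Σ*vΣ*`, `supp(u)` is nonempty, and `supp(u)` is minimal
among the nonempty supports of words in `Σ*vΣ*`. -/
def IsVMinimal {Q A : Type*} [Fintype Q] [DecidableEq Q] (δ : Q → A → Q) {k : ℕ}
    {nn : Fin k → ℕ}
    (e : Ralg δ →ₐ[ℂ] ∀ i : Fin k, Matrix (Fin (nn i)) (Fin (nn i)) ℂ)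
    (v u : List A) : Prop :=
  InFactor v u ∧ (suppW δ e u).Nonempty ∧
    ∀ z : List A, InFactor v z → suppW δ e z ⊆ suppW δ e u →
      suppW δ e z = ∅ ∨ suppW δ e z = suppW δ e u

/-- The `i`-th factor monoid `ℳ_i = θ_i(Σ*)`. -/
def factorMonoid {Q A : Type*} [Fintype Q] [DecidableEq Q] (δ : Q → A → Q) {k : ℕ}
    {nn : Fin k → ℕ}
    (e : Ralg δ →ₐ[ℂ] ∀ i : Fin k, Matrix (Fin (nn i)) (Fin (nn i)) ℂ)
    (i : Fin k) : Set (Matrix (Fin (nn i)) (Fin (nn i)) ℂ) :=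
  Set.range fun u : List A => theta δ e u i

/-- A two-sided ideal of the (sub)monoid `M`. -/
def IsSetIdeal {X : Type*} [Mul X] (M I : Set X) : Prop :=
  I ⊆ M ∧ ∀ a ∈ M, ∀ x ∈ I, a * x ∈ I ∧ x * a ∈ I

/-- `I` is a `0`-minimal (two-sided) ideal of the monoid `M`. -/
def IsZeroMinimalIdeal {X : Type*} [Mul X] [Zero X] (M I : Set X) : Prop :=
  IsSetIdeal M I ∧ (0 : X) ∈ I ∧ I ≠ {0} ∧
    ∀ J : Set X, IsSetIdeal M J → (0 : X) ∈ J → J ⊆ I → J ≠ {0} → J = I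

/-- `Rnk_i(g) = min {rk(u) : θ_i(u) = g}`. -/
def rnkElt {Q A : Type*} [Fintype Q] [DecidableEq Q] (δ : Q → A → Q) {k : ℕ}
    {nn : Fin k → ℕ}
    (e : Ralg δ →ₐ[ℂ] ∀ i : Fin k, Matrix (Fin (nn i)) (Fin (nn i)) ℂ)
    (i : Fin k) (g : Matrix (Fin (nn i)) (Fin (nn i)) ℂ) : ℕ :=
  sInf {m | ∃ u : List A, theta δ e u i = g ∧ wordRank δ u = m}

/-- `Rnk(ℐ_i) = min {Rnk_i(g) : g ∈ ℐ_i ∖ {0}}`. -/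
def rnkIdeal {Q A : Type*} [Fintype Q] [DecidableEq Q] (δ : Q → A → Q) {k : ℕ}
    {nn : Fin k → ℕ}
    (e : Ralg δ →ₐ[ℂ] ∀ i : Fin k, Matrix (Fin (nn i)) (Fin (nn i)) ℂ)
    (i : Fin k) (I : Set (Matrix (Fin (nn i)) (Fin (nn i)) ℂ)) : ℕ :=
  sInf {m | ∃ g ∈ I, g ≠ 0 ∧ rnkElt δ e i g = m}

/-- `w` `u`-represents `g`: `w ∈ Σ*uΣ*`, `θ_i(w) = g`, and either `g = 0` or `rk(w)` is
minimum among all words with the first two properties. -/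
def URepresents {Q A : Type*} [Fintype Q] [DecidableEq Q] (δ : Q → A → Q) {k : ℕ}
    {nn : Fin k → ℕ}
    (e : Ralg δ →ₐ[ℂ] ∀ i : Fin k, Matrix (Fin (nn i)) (Fin (nn i)) ℂ)
    (u : List A) (i : Fin k) (w : List A) (g : Matrix (Fin (nn i)) (Fin (nn i)) ℂ) : Prop :=
  InFactor u w ∧ theta δ e w i = g ∧
    (g = 0 ∨ ∀ w' : List A, InFactor u w' → theta δ e w' i = g → wordRank δ w ≤ wordRank δ w')

/-- The relation `σ_i` on `ℐ_i`. -/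
def sigmaRel {Q A : Type*} [Fintype Q] [DecidableEq Q] (δ : Q → A → Q) {k : ℕ}
    {nn : Fin k → ℕ}
    (e : Ralg δ →ₐ[ℂ] ∀ i : Fin k, Matrix (Fin (nn i)) (Fin (nn i)) ℂ)
    (i : Fin k) (u : List A)
    (g f : Matrix (Fin (nn i)) (Fin (nn i)) ℂ) : Prop :=
  g = f ∨ ∃ w₁ w₂ : List A, URepresents δ e u i w₁ g ∧ URepresents δ e u i w₂ f ∧
    1 < (imageSet δ w₁ ∩ imageSet δ w₂).card

/-- `T ⊆ [1,k]` is a core. -/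
def IsCore {Q A : Type*} [Fintype Q] [DecidableEq Q] (δ : Q → A → Q) {k : ℕ}
    {nn : Fin k → ℕ}
    (e : Ralg δ →ₐ[ℂ] ∀ i : Fin k, Matrix (Fin (nn i)) (Fin (nn i)) ℂ)
    (T : Set (Fin k)) : Prop :=
  ∀ x : List A, (∀ i ∈ T, theta δ e x i = 0) → ∀ i : Fin k, theta δ e x i = 0

/-- A minimal core. -/
def IsMinimalCore {Q A : Type*} [Fintype Q] [DecidableEq Q] (δ : Q → A → Q) {k : ℕ}
    {nn : Fin k → ℕ}
    (e : Ralg δ →ₐ[ℂ] ∀ i : Fin k, Matrix (Fin (nn i)) (Fin (nn i)) ℂ)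
    (T : Set (Fin k)) : Prop :=
  IsCore δ e T ∧ ∀ T' : Set (Fin k), T' ⊆ T → IsCore δ e T' → T' = T

/-- An automaton congruence. -/
def IsCongruence {Q A : Type*} (δ : Q → A → Q) (σ : Q → Q → Prop) : Prop :=
  Equivalence σ ∧ ∀ q p : Q, σ q p → ∀ u : List A, σ (actW δ q u) (actW δ p u)

/-- A simple automaton: the only congruences are the identity and the universal relation. -/
def IsSimple {Q A : Type*} (δ : Q → A → Q) : Prop :=
  ∀ σ : Q → Q → Prop, IsCongruence δ σ → σ = Eq ∨ σ = fun _ _ => True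


/-!
A non-reset word `u` has `rk(u) ≥ Fr(𝒜)`, and a reset word acts as `0` on `w⊥`; so every word
with `θ_i(u) ≠ 0` has rank at least `Fr(𝒜)`, which gives the inequality. Conversely, if
`u ∈ Fs(𝒜)` is not radical then `θ_i(u) ≠ 0` for some `i`. Since ranks only drop along
products, the images under `θ_i` of the words of rank at most `rk(u)` form an ideal of `ℳ_i`; it
contains `θ_i(u)` and `0 = θ_i(uv)` for a reset word `v`. The monoid `ℳ_i` is finite, so this ideal
contains a `0`-minimal ideal, which must be `ℐ_i`; hence some nonzero `g ∈ ℐ_i` has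
`Rnk_i(g) ≤ rk(u) = Fr(𝒜)`.
-/

section ZeroMinimalIdeal

variable {X : Type*} [Mul X] [Zero X] {M J : Set X}

theorem exists_isZeroMinimalIdeal_subset (hfin : J.Finite) (hJ : IsSetIdeal M J)
    (h0 : (0 : X) ∈ J) (hne : J ≠ {0}) : ∃ K ⊆ J, IsZeroMinimalIdeal M K := by
  let S : Set (Set X) := {K | K ⊆ J ∧ IsSetIdeal M K ∧ (0 : X) ∈ K ∧ K ≠ {0}}
  have hS : S.Finite := hfin.finite_subsets.subset fun K hK => hK.1
  obtain ⟨K, -, hKmin⟩ := hS.exists_le_minimal (a := J) ⟨subset_rfl, hJ, h0, hne⟩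
  obtain ⟨hKJ, hKideal, hK0, hKne⟩ := hKmin.prop
  exact ⟨K, hKJ, hKideal, hK0, hKne, fun K' hK'ideal hK'0 hK'K hK'ne =>
    hKmin.eq_of_le ⟨hK'K.trans hKJ, hK'ideal, hK'0, hK'ne⟩ hK'K⟩

theorem subset_of_forall_isZeroMinimalIdeal_eq {I : Set X}
    (huniq : ∀ K, IsZeroMinimalIdeal M K → K = I) (hfin : J.Finite) (hJ : IsSetIdeal M J)
    (h0 : (0 : X) ∈ J) (hne : J ≠ {0}) : I ⊆ J := by
  obtain ⟨K, hKJ, hK⟩ := exists_isZeroMinimalIdeal_subset hfin hJ h0 hne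
  exact huniq K hK ▸ hKJ

theorem IsZeroMinimalIdeal.exists_ne_zero {I : Set X} (hI : IsZeroMinimalIdeal M I) :
    ∃ g ∈ I, g ≠ 0 :=
  ((Set.nontrivial_iff_ne_singleton hI.2.1).mpr hI.2.2.1).exists_ne 0

end ZeroMinimalIdeal

section WordAction

variable {Q A : Type*} (δ : Q → A → Q)

theorem actW_append (q : Q) (u v : List A) :
    actW δ q (u ++ v) = actW δ (actW δ q u) v :=
  List.foldl_append

variable [Fintype Q] [DecidableEq Q]

theorem imageSet_append (u v : List A) :
    imageSet δ (u ++ v) = (imageSet δ u).image fun q => actW δ q v := by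
  ext p
  simp [imageSet, actW_append]

theorem wordRank_append_le_left (u v : List A) : wordRank δ (u ++ v) ≤ wordRank δ u := by
  rw [wordRank, imageSet_append]
  exact Finset.card_image_le

theorem wordRank_append_le_right (u v : List A) : wordRank δ (u ++ v) ≤ wordRank δ v := by
  rw [wordRank, imageSet_append]
  refine Finset.card_le_card fun p hp => ?_
  obtain ⟨_, -, rfl⟩ := Finset.mem_image.mp hp
  exact Finset.mem_image_of_mem _ (Finset.mem_univ _)

theorem piLin_apply (u : List A) (v : Q → ℂ) (p : Q) :
    piLin δ u v p = ∑ q ∈ Finset.univ.filter (fun q => actW δ q u = p), v q := rfl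

theorem piLin_append (u v : List A) : piLin δ (u ++ v) = piLin δ v ∘ₗ piLin δ u := by
  refine LinearMap.ext fun x => funext fun p => ?_
  simp only [LinearMap.comp_apply, piLin_apply]
  rw [Finset.sum_fiberwise_eq_sum_filter]
  exact Finset.sum_congr (by ext q; simp [actW_append]) fun _ _ => rfl

theorem piLin_congr {u u' : List A} (h : ∀ q, actW δ q u = actW δ q u') :
    piLin δ u = piLin δ u' := by
  refine LinearMap.ext fun x => funext fun p => ?_
  simp only [piLin_apply, h]

theorem rhoR_append (u v : List A) : rhoR δ (u ++ v) = rhoR δ u * rhoR δ v := by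
  apply Subtype.ext
  change MulOpposite.op (rhoEnd δ (u ++ v)) = MulOpposite.op (rhoEnd δ u) * MulOpposite.op _
  rw [← MulOpposite.op_mul]
  congr 1
  ext x : 2
  exact congrArg (· x.val) (piLin_append δ u v)

theorem rhoR_congr {u u' : List A} (h : ∀ q, actW δ q u = actW δ q u') :
    rhoR δ u = rhoR δ u' := by
  apply Subtype.ext
  change MulOpposite.op (rhoEnd δ u) = MulOpposite.op (rhoEnd δ u')
  congr 1
  ext x : 2
  exact congrArg (· x.val) (piLin_congr δ h)

/-- A reset word sends every vector to a multiple of its target state, and on `w⊥` that multiple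
is the coordinate sum `0`. -/
theorem rhoR_eq_zero_of_isReset {u : List A} (h : IsReset δ u) : rhoR δ u = 0 := by
  obtain ⟨q₀, hq₀⟩ := Finset.card_eq_one.mp h
  have hact : ∀ q, actW δ q u = q₀ := fun q => Finset.mem_singleton.mp
    (hq₀ ▸ (Finset.mem_image_of_mem _ (Finset.mem_univ q) : actW δ q u ∈ imageSet δ u))
  apply Subtype.ext
  change MulOpposite.op (rhoEnd δ u) = MulOpposite.op 0
  congr 1
  ext x p
  change piLin δ u x.val p = 0
  rw [piLin_apply]
  by_cases hp : q₀ = p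
  · simpa [hact, hp] using (mem_Wperp _).mp x.2
  · simp [hact, hp]

variable {k : ℕ} {nn : Fin k → ℕ}
  (e : Ralg δ →ₐ[ℂ] ∀ i : Fin k, Matrix (Fin (nn i)) (Fin (nn i)) ℂ)

theorem theta_append (u v : List A) (i : Fin k) :
    theta δ e (u ++ v) i = theta δ e u i * theta δ e v i := by
  simp only [theta, rhoR_append, map_mul, Pi.mul_apply]

theorem theta_eq_zero_of_isReset {u : List A} (h : IsReset δ u) (i : Fin k) :
    theta δ e u i = 0 := by
  simp only [theta, rhoR_eq_zero_of_isReset δ h, map_zero, Pi.zero_apply]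

theorem factorMonoid_finite (i : Fin k) : (factorMonoid δ e i).Finite := by
  have hfac : Function.FactorsThrough (fun u => theta δ e u i) (fun u q => actW δ q u) :=
    fun u u' h => by simp only [theta, rhoR_congr δ (congrFun h)]
  refine (Set.finite_range (Function.extend (fun u q => actW δ q u) (fun u => theta δ e u i)
    fun _ => 0)).subset ?_
  rintro _ ⟨u, rfl⟩
  exact ⟨_, hfac.extend_apply _ u⟩

end WordAction

section RankBounds

variable {Q A : Type*} [Fintype Q] [DecidableEq Q] (δ : Q → A → Q) {k : ℕ} {nn : Fin k → ℕ}
  (e : Ralg δ →ₐ[ℂ] ∀ i : Fin k, Matrix (Fin (nn i)) (Fin (nn i)) ℂ)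

theorem formerRank_le_wordRank_of_theta_ne_zero {u : List A} {i : Fin k}
    (hu : theta δ e u i ≠ 0) : formerRank δ ≤ wordRank δ u :=
  Nat.sInf_le ⟨u, fun h => hu (theta_eq_zero_of_isReset δ e h i), rfl⟩

theorem formerRank_le_rnkElt {i : Fin k} {g : Matrix (Fin (nn i)) (Fin (nn i)) ℂ}
    (hg : g ∈ factorMonoid δ e i) (hg0 : g ≠ 0) : formerRank δ ≤ rnkElt δ e i g := by
  obtain ⟨u, rfl⟩ := hg
  refine le_csInf ⟨_, u, rfl, rfl⟩ ?_
  rintro _ ⟨w, hw, rfl⟩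
  exact formerRank_le_wordRank_of_theta_ne_zero δ e (hw ▸ hg0)

theorem formerRank_le_rnkIdeal {i : Fin k} {I : Set (Matrix (Fin (nn i)) (Fin (nn i)) ℂ)}
    (hI : IsZeroMinimalIdeal (factorMonoid δ e i) I) : formerRank δ ≤ rnkIdeal δ e i I := by
  obtain ⟨g, hgI, hg0⟩ := hI.exists_ne_zero
  refine le_csInf ⟨_, g, hgI, hg0, rfl⟩ ?_
  rintro _ ⟨g', hg'I, hg'0, rfl⟩
  exact formerRank_le_rnkElt δ e (hI.1.1 hg'I) hg'0

def lowRankImages (i : Fin k) (r : ℕ) : Set (Matrix (Fin (nn i)) (Fin (nn i)) ℂ) :=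
  {g | ∃ w : List A, theta δ e w i = g ∧ wordRank δ w ≤ r}

theorem isSetIdeal_lowRankImages (i : Fin k) (r : ℕ) :
    IsSetIdeal (factorMonoid δ e i) (lowRankImages δ e i r) := by
  refine ⟨fun g ⟨w, hw, _⟩ => ⟨w, hw⟩, ?_⟩
  rintro _ ⟨z, rfl⟩ _ ⟨w, rfl, hw⟩
  exact ⟨⟨z ++ w, theta_append δ e z w i, (wordRank_append_le_right δ z w).trans hw⟩,
    ⟨w ++ z, theta_append δ e w z i, (wordRank_append_le_left δ w z).trans hw⟩⟩

theorem rnkIdeal_le_wordRank {i : Fin k} {I : Set (Matrix (Fin (nn i)) (Fin (nn i)) ℂ)}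
    (hI : IsZeroMinimalIdeal (factorMonoid δ e i) I)
    (huniq : ∀ J, IsZeroMinimalIdeal (factorMonoid δ e i) J → J = I)
    (hsync : IsSynchronizing δ) {u : List A} (hu : theta δ e u i ≠ 0) :
    rnkIdeal δ e i I ≤ wordRank δ u := by
  obtain ⟨v, hv⟩ := hsync
  set J := lowRankImages δ e i (wordRank δ u)
  have hJ : IsSetIdeal (factorMonoid δ e i) J := isSetIdeal_lowRankImages δ e i _
  have h0 : (0 : Matrix (Fin (nn i)) (Fin (nn i)) ℂ) ∈ J :=
    ⟨u ++ v, by rw [theta_append, theta_eq_zero_of_isReset δ e hv, mul_zero],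
      wordRank_append_le_left δ u v⟩
  have hne : J ≠ {0} := fun h => by
    have hmem : theta δ e u i ∈ J := ⟨u, rfl, le_rfl⟩
    exact hu (by rwa [h] at hmem)
  have hIJ : I ⊆ J :=
    subset_of_forall_isZeroMinimalIdeal_eq huniq ((factorMonoid_finite δ e i).subset hJ.1) hJ
      h0 hne
  obtain ⟨g, hgI, hg0⟩ := hI.exists_ne_zero
  obtain ⟨w, hw, hwu⟩ := hIJ hgI
  calc rnkIdeal δ e i I ≤ rnkElt δ e i g := Nat.sInf_le ⟨g, hgI, hg0, rfl⟩
    _ ≤ wordRank δ w := Nat.sInf_le ⟨w, hw, rfl⟩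
    _ ≤ wordRank δ u := hwu

end RankBounds

theorem stmt16_general {Q A : Type*} [Fintype Q] [DecidableEq Q] (δ : Q → A → Q)
    {k : ℕ} {nn : Fin k → ℕ}
    (e : Ralg δ →ₐ[ℂ] ∀ i : Fin k, Matrix (Fin (nn i)) (Fin (nn i)) ℂ)
    (he_ker : ∀ x : Ralg δ, e x = 0 ↔ (x : (Module.End ℂ (Wperp Q))ᵐᵒᵖ) ∈ RadSet δ)
    (Ii : ∀ i : Fin k, Set (Matrix (Fin (nn i)) (Fin (nn i)) ℂ))
    (hIi : ∀ i : Fin k, IsZeroMinimalIdeal (factorMonoid δ e i) (Ii i))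
    (hIuniq : ∀ (i : Fin k) (J : Set (Matrix (Fin (nn i)) (Fin (nn i)) ℂ)),
      IsZeroMinimalIdeal (factorMonoid δ e i) J → J = Ii i)
    (hk : 0 < k) (hsync : IsSynchronizing δ) :
    formerRank δ ≤ sInf (Set.range fun i : Fin k => rnkIdeal δ e i (Ii i)) ∧
      ((Fs δ \ RadWords δ).Nonempty →
        sInf (Set.range fun i : Fin k => rnkIdeal δ e i (Ii i)) = formerRank δ) := by
  have hle : formerRank δ ≤ sInf (Set.range fun i : Fin k => rnkIdeal δ e i (Ii i)) :=
    le_csInf ⟨_, ⟨0, hk⟩, rfl⟩ fun _ ⟨i, hi⟩ => hi ▸ formerRank_le_rnkIdeal δ e (hIi i)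
  refine ⟨hle, fun ⟨u, hFs, hRad⟩ => le_antisymm ?_ hle⟩
  obtain ⟨i, hi⟩ : ∃ i, theta δ e u i ≠ 0 := by
    by_contra! h
    exact hRad ((he_ker (rhoR δ u)).mp (funext h))
  calc sInf (Set.range fun i : Fin k => rnkIdeal δ e i (Ii i))
      ≤ rnkIdeal δ e i (Ii i) := Nat.sInf_le ⟨i, rfl⟩
    _ ≤ wordRank δ u := rnkIdeal_le_wordRank δ e (hIi i) (hIuniq i) hsync hi
    _ = formerRank δ := hFs

theorem stmt16 {Q A : Type*} [Fintype Q] [DecidableEq Q] (δ : Q → A → Q)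
    {k : ℕ} {nn : Fin k → ℕ}
    (e : Ralg δ →ₐ[ℂ] ∀ i : Fin k, Matrix (Fin (nn i)) (Fin (nn i)) ℂ)
    (he_surj : Function.Surjective e)
    (he_ker : ∀ x : Ralg δ, e x = 0 ↔ (x : (Module.End ℂ (Wperp Q))ᵐᵒᵖ) ∈ RadSet δ)
    (Ii : ∀ i : Fin k, Set (Matrix (Fin (nn i)) (Fin (nn i)) ℂ))
    (hIi : ∀ i : Fin k, IsZeroMinimalIdeal (factorMonoid δ e i) (Ii i))
    (hIuniq : ∀ (i : Fin k) (J : Set (Matrix (Fin (nn i)) (Fin (nn i)) ℂ)),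
      IsZeroMinimalIdeal (factorMonoid δ e i) J → J = Ii i)
    (hk : 0 < k) (hn : 2 ≤ Fintype.card Q) (hsync : IsSynchronizing δ) :
    formerRank δ ≤ sInf (Set.range fun i : Fin k => rnkIdeal δ e i (Ii i)) ∧
      ((Fs δ \ RadWords δ).Nonempty →
        sInf (Set.range fun i : Fin k => rnkIdeal δ e i (Ii i)) = formerRank δ) :=
  stmt16_general δ e he_ker Ii hIi hIuniq hk hsync

end
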